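/- arXiv:0809.1353 — 4 statements merged into one kernel-verified Lean document; each statement's English description precedes it below -/
import Mathlib

section
/- Let (x, c, η) with x > 0, c ≥ 0, η ≥ 0 satisfy η < H(F⁻¹(x, c)). Then the partial derivative of G with respect to its first argument exists at (x, c, η) and is given by ∂G/∂x (x, c, η) = φ(G(x, c, η)) · exp(−c ∫_D^{F⁻¹(x, c)} ψ(r) dr) / φ(F⁻¹(x, c)). -/
/-!
For fixed `c` and `η`, `G(·, c, η)` is the composite `H⁻¹ ∘ (· - η) ∘ H ∘ F⁻¹(·, c)`. Both `H` and
`F(·, c)` are primitives of positive functions continuous on `[D, ∞)`, so they are strictly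
increasing with a nonzero strict derivative at every `t > D`, and the one-dimensional inverse
function theorem differentiates their inverses. The chain rule then gives
`φ(G) · (1 / φ(F⁻¹)) · exp(-c ∫ψ)`. Since `c ≥ 0` and `ψ ≥ 0`, `F(t, c) ≥ t - D`, so `x` is a
value of `F(·, c)` at some `A > D`; and `0 < H(A) - η ≤ H(A)` is a value of `H` at some `B > D`.
-/

open MeasureTheory

/-- `H(x) = ∫_D^x dr / φ(r)`. -/
noncomputable def Hfun (D : ℝ) (φ : ℝ → ℝ) (x : ℝ) : ℝ := ∫ r in D..x, 1 / φ r

/-- `H⁻¹ : [0, I) → [D, ∞)`, the inverse of `H` on `[D, ∞)`. -/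
noncomputable def Hinv (D : ℝ) (φ : ℝ → ℝ) (y : ℝ) : ℝ :=
  Function.invFunOn (Hfun D φ) (Set.Ici D) y

/-- `F(x, c) = ∫_D^x exp(c ∫_D^t ψ(r) dr) dt`. -/
noncomputable def Ffun (D : ℝ) (ψ : ℝ → ℝ) (x c : ℝ) : ℝ :=
  ∫ t in D..x, Real.exp (c * ∫ r in D..t, ψ r)

/-- `F⁻¹(·, c) : [0, ∞) → [D, ∞)`, the inverse of `F(·, c)` on `[D, ∞)`. -/
noncomputable def Finv (D : ℝ) (ψ : ℝ → ℝ) (y c : ℝ) : ℝ :=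
  Function.invFunOn (fun x => Ffun D ψ x c) (Set.Ici D) y

/-- `G(x, c, η) = H⁻¹(H(F⁻¹(x, c)) − η)`. -/
noncomputable def Gfun (D : ℝ) (φ ψ : ℝ → ℝ) (x c η : ℝ) : ℝ :=
  Hinv D φ (Hfun D φ (Finv D ψ x c) - η)

/-- The domain `𝒢 = {(x, c, η) ∈ [0, ∞)³ : η ≤ H(F⁻¹(x, c))}` of `G`. -/
def Gset (D : ℝ) (φ ψ : ℝ → ℝ) : Set (ℝ × ℝ × ℝ) :=
  {p | 0 ≤ p.1 ∧ 0 ≤ p.2.1 ∧ 0 ≤ p.2.2 ∧ p.2.2 ≤ Hfun D φ (Finv D ψ p.1 p.2.1)}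

open Set Filter Topology Function

theorem HasStrictDerivAt.hasDerivAt_invFunOn {f : ℝ → ℝ} {s : Set ℝ} {f' a : ℝ}
    (hf : HasStrictDerivAt f f' a) (hf' : f' ≠ 0) (hinj : InjOn f s) (hs : s ∈ 𝓝 a) :
    HasDerivAt (invFunOn f s) f'⁻¹ (f a) :=
  (hf.to_local_left_inverse hf' (eventually_of_mem hs fun _ hx ↦ hinj.leftInvOn_invFunOn hx))
    |>.hasDerivAt

namespace ContinuousOn

variable {g : ℝ → ℝ} {D : ℝ}

theorem continuousOn_primitive_Ici (hg : ContinuousOn g (Ici D)) :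
    ContinuousOn (fun t ↦ ∫ r in D..t, g r) (Ici D) := by
  intro t ht
  have hDt : D ≤ t + 1 := by linarith [mem_Ici.1 ht]
  have hcont := intervalIntegral.continuousOn_primitive_interval'
    (μ := volume) (hg.mono Icc_subset_Ici_self |>.intervalIntegrable_of_Icc hDt) left_mem_uIcc
  rw [uIcc_of_le hDt, ← Ici_inter_Iic] at hcont
  exact (hcont t ⟨ht, by simp⟩).mono_of_mem_nhdsWithin
    (inter_mem_nhdsWithin _ (Iic_mem_nhds (lt_add_one t)))

theorem hasStrictDerivAt_primitive_Ici (hg : ContinuousOn g (Ici D)) {t : ℝ} (ht : D < t) :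
    HasStrictDerivAt (fun u ↦ ∫ r in D..u, g r) (g t) t :=
  intervalIntegral.integral_hasStrictDerivAt_right
    (hg.mono Icc_subset_Ici_self |>.intervalIntegrable_of_Icc ht.le)
    ((hg.mono Ioi_subset_Ici_self).stronglyMeasurableAtFilter isOpen_Ioi t ht)
    (hg.continuousAt (Ici_mem_nhds ht))

theorem strictMonoOn_primitive_Ici (hg : ContinuousOn g (Ici D))
    (hpos : ∀ r ∈ Ici D, 0 < g r) : StrictMonoOn (fun t ↦ ∫ r in D..t, g r) (Ici D) := by
  intro s hs t ht hst
  have hint : ∀ b ∈ Ici D, IntervalIntegrable g volume D b := fun b hb ↦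
    hg.mono Icc_subset_Ici_self |>.intervalIntegrable_of_Icc hb
  have hpos : 0 < ∫ r in s..t, g r :=
    intervalIntegral.intervalIntegral_pos_of_pos_on
      (hg.mono (Icc_subset_Ici_iff hst.le |>.2 hs) |>.intervalIntegrable_of_Icc hst.le)
      (fun r hr ↦ hpos r (le_trans hs hr.1.le)) hst
  rw [← intervalIntegral.integral_interval_sub_left (hint t ht) (hint s hs)] at hpos
  exact sub_pos.1 hpos

theorem exists_mem_Ioc_primitive_eq (hg : ContinuousOn g (Ici D)) {b y : ℝ} (hb : D ≤ b)
    (hy : y ∈ Ioc 0 (∫ r in D..b, g r)) : ∃ t ∈ Ioc D b, ∫ r in D..t, g r = y := by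
  obtain ⟨t, ht, hty⟩ := intermediate_value_Icc hb
    (hg.continuousOn_primitive_Ici.mono Icc_subset_Ici_self)
    (by simpa using Ioc_subset_Icc_self hy)
  refine ⟨t, ⟨ht.1.lt_of_ne ?_, ht.2⟩, hty⟩
  rintro rfl
  simp [← hty] at hy

theorem hasDerivAt_invFunOn_primitive_Ici (hg : ContinuousOn g (Ici D))
    (hpos : ∀ r ∈ Ici D, 0 < g r) {t : ℝ} (ht : D < t) :
    HasDerivAt (invFunOn (fun u ↦ ∫ r in D..u, g r) (Ici D)) (g t)⁻¹ (∫ r in D..t, g r) :=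
  (hg.hasStrictDerivAt_primitive_Ici ht).hasDerivAt_invFunOn (hpos t ht.le).ne'
    (hg.strictMonoOn_primitive_Ici hpos).injOn (Ici_mem_nhds ht)

end ContinuousOn

section Ffun

variable {D c : ℝ} {ψ : ℝ → ℝ}

theorem continuousOn_exp_mul_primitive_Ici (hψ : ContinuousOn ψ (Ici D)) :
    ContinuousOn (fun t ↦ Real.exp (c * ∫ r in D..t, ψ r)) (Ici D) :=
  Real.continuous_exp.comp_continuousOn (continuousOn_const.mul hψ.continuousOn_primitive_Ici)

theorem sub_le_Ffun (hψ : ContinuousOn ψ (Ici D)) (hψnn : ∀ r ∈ Ici D, 0 ≤ ψ r) (hc : 0 ≤ c)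
    {t : ℝ} (ht : D ≤ t) : t - D ≤ Ffun D ψ t c :=
  calc t - D = ∫ _ in D..t, (1 : ℝ) := by simp
    _ ≤ Ffun D ψ t c :=
      intervalIntegral.integral_mono_on ht intervalIntegrable_const
        ((continuousOn_exp_mul_primitive_Ici hψ).mono Icc_subset_Ici_self
          |>.intervalIntegrable_of_Icc ht)
        fun s hs ↦ Real.one_le_exp <| mul_nonneg hc <|
          intervalIntegral.integral_nonneg hs.1 fun r hr ↦ hψnn r hr.1

end Ffun

theorem stmt_4_general (D : ℝ) (φ ψ : ℝ → ℝ)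
    (hφc : ContinuousOn φ (Set.Ici D)) (hφpos : ∀ r ∈ Set.Ici D, 0 < φ r)
    (hψc : ContinuousOn ψ (Set.Ici D)) (hψnn : ∀ r ∈ Set.Ici D, 0 ≤ ψ r)
    (x c η : ℝ) (hx : 0 < x) (hc : 0 ≤ c) (hη : 0 ≤ η)
    (hlt : η < Hfun D φ (Finv D ψ x c)) :
    HasDerivAt (fun u => Gfun D φ ψ u c η)
      (φ (Gfun D φ ψ x c η) * Real.exp (-(c * ∫ r in D..(Finv D ψ x c), ψ r)) /
        φ (Finv D ψ x c)) x := by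
  set E : ℝ → ℝ := fun t ↦ Real.exp (c * ∫ r in D..t, ψ r) with hE
  have hEc : ContinuousOn E (Ici D) := continuousOn_exp_mul_primitive_Ici hψc
  have hEpos : ∀ t ∈ Ici D, 0 < E t := fun t _ ↦ Real.exp_pos _
  have hφinv : ContinuousOn (fun r ↦ 1 / φ r) (Ici D) :=
    continuousOn_const.div hφc fun r hr ↦ (hφpos r hr).ne'
  have hφinvpos : ∀ r ∈ Ici D, 0 < 1 / φ r := fun r hr ↦ one_div_pos.2 (hφpos r hr)
  obtain ⟨A, hA, hFA⟩ : ∃ A ∈ Ioc D (D + x), Ffun D ψ A c = x :=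
    hEc.exists_mem_Ioc_primitive_eq (by linarith)
      ⟨hx, (add_sub_cancel_left D x).symm.trans_le
        (sub_le_Ffun hψc hψnn hc (le_add_of_nonneg_right hx.le))⟩
  have hFinv : Finv D ψ x c = A :=
    hFA ▸ (hEc.strictMonoOn_primitive_Ici hEpos).injOn.leftInvOn_invFunOn hA.1.le
  rw [hFinv] at hlt
  obtain ⟨B, hB, hHB⟩ : ∃ B ∈ Ioc D A, Hfun D φ B = Hfun D φ A - η :=
    hφinv.exists_mem_Ioc_primitive_eq hA.1.le ⟨sub_pos.2 hlt, sub_le_self _ hη⟩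
  have hG : Gfun D φ ψ x c η = B := by
    rw [Gfun, hFinv, ← hHB]
    exact (hφinv.strictMonoOn_primitive_Ici hφinvpos).injOn.leftInvOn_invFunOn hB.1.le
  have hF' : HasDerivAt (Finv D ψ · c) (E A)⁻¹ x :=
    hFA ▸ hEc.hasDerivAt_invFunOn_primitive_Ici hEpos hA.1
  have hH' : HasDerivAt (Hfun D φ · - η) (1 / φ A) (Finv D ψ x c) :=
    hFinv ▸ (hφinv.hasStrictDerivAt_primitive_Ici hA.1).hasDerivAt.sub_const η
  have hHinv' : HasDerivAt (Hinv D φ) (1 / φ B)⁻¹ (Hfun D φ (Finv D ψ x c) - η) :=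
    hFinv ▸ hHB ▸ hφinv.hasDerivAt_invFunOn_primitive_Ici hφinvpos hB.1
  refine (hHinv'.comp x (hH'.comp x hF')).congr_deriv ?_
  rw [hG, hFinv, hE, Real.exp_neg]
  field_simp

/-- If `x > 0`, `c ≥ 0`, `η ≥ 0` and `η < H(F⁻¹(x, c))`, then the partial
derivative of `G` with respect to its first argument exists at `(x, c, η)` and is given by
`∂G/∂x (x,c,η) = φ(G(x,c,η)) · exp(−c ∫_D^{F⁻¹(x,c)} ψ(r) dr) / φ(F⁻¹(x,c))`. -/
theorem stmt_4 (D : ℝ) (hD : 0 ≤ D) (φ ψ : ℝ → ℝ)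
    (hφc : ContinuousOn φ (Set.Ici D)) (hφpos : ∀ r ∈ Set.Ici D, 0 < φ r)
    (hψc : ContinuousOn ψ (Set.Ici D)) (hψnn : ∀ r ∈ Set.Ici D, 0 ≤ ψ r)
    (x c η : ℝ) (hx : 0 < x) (hc : 0 ≤ c) (hη : 0 ≤ η)
    (hlt : η < Hfun D φ (Finv D ψ x c)) :
    HasDerivAt (fun u => Gfun D φ ψ u c η)
      (φ (Gfun D φ ψ x c η) * Real.exp (-(c * ∫ r in D..(Finv D ψ x c), ψ r)) /
        φ (Finv D ψ x c)) x :=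
  stmt_4_general D φ ψ hφc hφpos hψc hψnn x c η hx hc hη hlt
end

section
/- Assume in addition that φ is of class C¹ on [D, ∞). Let (x, c, η) with x > 0, c ≥ 0, η ≥ 0 satisfy η < H(F⁻¹(x, c)). Then the second partial derivative of G with respect to its first argument exists at (x, c, η) and equals ∂²G/∂x² (x, c, η) = (∂G/∂x (x, c, η))² / φ(G(x, c, η)) · [ φ'(G(x, c, η)) − φ'(F⁻¹(x, c)) − c · φ(F⁻¹(x, c)) · ψ(F⁻¹(x, c)) ], where ∂G/∂x (x, c, η) = φ(G(x, c, η)) · exp(−c ∫_D^{F⁻¹(x, c)} ψ(r) dr) / φ(F⁻¹(x, c)). -/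
open MeasureTheory

/-!
`F(·, c)` and `H` are primitives `x ↦ ∫_D^x q` of functions `q` that are continuous and positive
on `[D, ∞)`. Such a primitive is strictly increasing and continuous, so its `invFunOn` inverse is
a local two-sided inverse near every value taken at an interior point, and is differentiable there
with derivative `1 / q`. The chain rule then gives
`∂G/∂x = φ(G) · φ(F⁻¹)⁻¹ · exp(-c ∫_D^{F⁻¹} ψ)`, and differentiating this product once more,
again by the chain rule, gives the second derivative.
-/

open Set Filter Topology

theorem StrictMonoOn.hasDerivAt_invFunOn {f : ℝ → ℝ} {s : Set ℝ} {w f' : ℝ}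
    (hf : StrictMonoOn f s) (hcont : ContinuousOn f s) (hs : s ∈ 𝓝 w)
    (hderiv : HasDerivAt f f' w) (hf' : f' ≠ 0) :
    HasDerivAt (Function.invFunOn f s) f'⁻¹ (f w) := by
  set g := Function.invFunOn f s
  have hleft : ∀ t ∈ s, g (f t) = t := hf.injOn.leftInvOn_invFunOn
  obtain ⟨l, u, ⟨hlw, hwu⟩, hlu⟩ := (mem_nhds_iff_exists_Ioo_subset).1 hs
  obtain ⟨a, hla, haw⟩ := exists_between hlw
  obtain ⟨b, hwb, hbu⟩ := exists_between hwu
  have hab : Icc a b ⊆ s := fun t ht => hlu ⟨hla.trans_le ht.1, ht.2.trans_lt hbu⟩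
  have hIoo : Ioo a b ⊆ s := Ioo_subset_Icc_self.trans hab
  have hws : w ∈ s := mem_of_mem_nhds hs
  have has : a ∈ s := hab (left_mem_Icc.2 (haw.trans hwb).le)
  have hbs : b ∈ s := hab (right_mem_Icc.2 (haw.trans hwb).le)
  have himage : Ioo (f a) (f b) ⊆ f '' Ioo a b :=
    intermediate_value_Ioo (haw.trans hwb).le (hcont.mono hab)
  have hright : ∀ z ∈ Ioo (f a) (f b), f (g z) = z := by
    intro z hz
    obtain ⟨t, ht, rfl⟩ := himage hz
    rw [hleft t (hIoo ht)]
  have hU : Ioo (f a) (f b) ∈ 𝓝 (f w) := Ioo_mem_nhds (hf has hws haw) (hf hws hbs hwb)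
  have hg_mono : MonotoneOn g (Ioo (f a) (f b)) := by
    intro z₁ hz₁ z₂ hz₂ hz
    obtain ⟨t₁, ht₁, rfl⟩ := himage hz₁
    obtain ⟨t₂, ht₂, rfl⟩ := himage hz₂
    rw [hleft t₁ (hIoo ht₁), hleft t₂ (hIoo ht₂)]
    exact (hf.le_iff_le (hIoo ht₁) (hIoo ht₂)).1 hz
  have hg_image : g '' Ioo (f a) (f b) ∈ 𝓝 (g (f w)) := by
    rw [hleft w hws]
    refine mem_of_superset (Ioo_mem_nhds haw hwb) fun t ht => ⟨f t, ?_, hleft t (hIoo ht)⟩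
    exact ⟨hf has (hIoo ht) ht.1, hf (hIoo ht) hbs ht.2⟩
  refine HasDerivAt.of_local_left_inverse ?_ (by rwa [hleft w hws]) hf'
    (eventually_of_mem hU hright)
  exact continuousAt_of_monotoneOn_of_image_mem_nhds hg_mono hU hg_image

section Primitive

variable {q : ℝ → ℝ} {D : ℝ}

theorem continuousOn_integral_Ici (hq : ContinuousOn q (Ici D)) :
    ContinuousOn (fun x => ∫ t in D..x, q t) (Ici D) := by
  intro x hx
  have hDx : D ≤ x + 1 := by linarith [mem_Ici.1 hx]
  have hIcc : ContinuousOn (fun x => ∫ t in D..x, q t) (Icc D (x + 1)) := by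
    simpa only [uIcc_of_le hDx] using intervalIntegral.continuousOn_primitive_interval
      ((hq.mono Icc_subset_Ici_self).integrableOn_Icc.mono_set (uIcc_of_le hDx).subset)
  refine (hIcc x ⟨hx, by linarith⟩).mono_of_mem_nhdsWithin ?_
  exact mem_of_superset (inter_mem_nhdsWithin (Ici D) (Iio_mem_nhds (lt_add_one x)))
    fun t ht => ⟨ht.1, le_of_lt ht.2⟩

theorem hasDerivAt_integral_of_continuousOn_Ici (hq : ContinuousOn q (Ici D)) {w : ℝ}
    (hw : D < w) : HasDerivAt (fun x => ∫ t in D..x, q t) (q w) w :=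
  intervalIntegral.integral_hasDerivAt_right
    ((hq.mono Icc_subset_Ici_self).intervalIntegrable_of_Icc hw.le)
    ((hq.mono Ioi_subset_Ici_self).stronglyMeasurableAtFilter isOpen_Ioi w hw)
    (hq.continuousAt (Ici_mem_nhds hw))

theorem strictMonoOn_integral_Ici (hq : ContinuousOn q (Ici D)) (hpos : ∀ r ∈ Ici D, 0 < q r) :
    StrictMonoOn (fun x => ∫ t in D..x, q t) (Ici D) := by
  intro a ha b hb hab
  have hint : ∀ {x y}, D ≤ x → x ≤ y → IntervalIntegrable q volume x y :=
    fun hx hxy => (hq.mono fun t ht => hx.trans ht.1).intervalIntegrable_of_Icc hxy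
  have hsplit := intervalIntegral.integral_add_adjacent_intervals (hint le_rfl ha) (hint ha hab.le)
  have hpos_ab : 0 < ∫ t in a..b, q t :=
    intervalIntegral.intervalIntegral_pos_of_pos_on (hint ha hab.le)
      (fun r hr => hpos r (le_of_lt (lt_of_le_of_lt ha hr.1))) hab
  dsimp only
  linarith

theorem exists_integral_eq_of_le (hq : ContinuousOn q (Ici D)) {y b : ℝ} (hy : 0 < y)
    (hb : D ≤ b) (hyb : y ≤ ∫ t in D..b, q t) : ∃ w, D < w ∧ ∫ t in D..w, q t = y := by
  obtain ⟨w, hw, hwy⟩ := intermediate_value_Icc hb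
    ((continuousOn_integral_Ici hq).mono Icc_subset_Ici_self)
    ⟨by simpa only [intervalIntegral.integral_same] using hy.le, hyb⟩
  refine ⟨w, hw.1.lt_of_ne ?_, hwy⟩
  rintro rfl
  simp only [intervalIntegral.integral_same] at hwy
  linarith

theorem hasDerivAt_invFunOn_integral_Ici (hq : ContinuousOn q (Ici D))
    (hpos : ∀ r ∈ Ici D, 0 < q r) {y b : ℝ} (hy : 0 < y) (hb : D ≤ b) (hyb : y ≤ ∫ t in D..b, q t) :
    D < Function.invFunOn (fun x => ∫ t in D..x, q t) (Ici D) y ∧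
      HasDerivAt (Function.invFunOn (fun x => ∫ t in D..x, q t) (Ici D))
        (q (Function.invFunOn (fun x => ∫ t in D..x, q t) (Ici D) y))⁻¹ y := by
  obtain ⟨w, hw, rfl⟩ := exists_integral_eq_of_le hq hy hb hyb
  have hmono := strictMonoOn_integral_Ici hq hpos
  rw [hmono.injOn.leftInvOn_invFunOn (le_of_lt hw)]
  exact ⟨hw, hmono.hasDerivAt_invFunOn (continuousOn_integral_Ici hq) (Ici_mem_nhds hw)
    (hasDerivAt_integral_of_continuousOn_Ici hq hw) (hpos w (le_of_lt hw)).ne'⟩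

end Primitive

section Inverses

variable {D : ℝ} {φ ψ : ℝ → ℝ}

theorem hasDerivAt_Finv (hψc : ContinuousOn ψ (Ici D)) (hψnn : ∀ r ∈ Ici D, 0 ≤ ψ r) {x c : ℝ}
    (hx : 0 < x) (hc : 0 ≤ c) :
    D < Finv D ψ x c ∧
      HasDerivAt (fun u => Finv D ψ u c)
        (Real.exp (-(c * ∫ r in D..Finv D ψ x c, ψ r))) x := by
  set q : ℝ → ℝ := fun t => Real.exp (c * ∫ r in D..t, ψ r)
  have hqc : ContinuousOn q (Ici D) :=
    (continuousOn_const.mul (continuousOn_integral_Ici hψc)).rexp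
  have hq_one : ∀ t ∈ Ici D, 1 ≤ q t := fun t ht => Real.one_le_exp
    (mul_nonneg hc (intervalIntegral.integral_nonneg ht fun r hr => hψnn r hr.1))
  -- `q ≥ 1` makes `F(·, c)` grow at least linearly, so `x` is attained before `D + x`.
  have hx_le : x ≤ ∫ t in D..D + x, q t :=
    calc x = ∫ _ in D..D + x, (1 : ℝ) := by simp
      _ ≤ ∫ t in D..D + x, q t := intervalIntegral.integral_mono_on (by linarith)
          intervalIntegrable_const
          ((hqc.mono Icc_subset_Ici_self).intervalIntegrable_of_Icc (by linarith))
          fun t ht => hq_one t ht.1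
  rw [Real.exp_neg]
  exact hasDerivAt_invFunOn_integral_Ici hqc (fun t ht => one_pos.trans_le (hq_one t ht)) hx
    (by linarith) hx_le

theorem hasDerivAt_Hinv (hφc : ContinuousOn φ (Ici D)) (hφpos : ∀ r ∈ Ici D, 0 < φ r) {y b : ℝ}
    (hy : 0 < y) (hb : D ≤ b) (hyb : y ≤ Hfun D φ b) :
    D < Hinv D φ y ∧ HasDerivAt (Hinv D φ) (φ (Hinv D φ y)) y := by
  have h := hasDerivAt_invFunOn_integral_Ici (q := fun r => 1 / φ r)
    (continuousOn_const.div hφc fun r hr => (hφpos r hr).ne')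
    (fun r hr => one_div_pos.2 (hφpos r hr)) hy hb hyb
  exact ⟨h.1, h.2.congr_deriv (inv_div 1 _ |>.trans (div_one _))⟩

theorem hasDerivAt_Hfun (hφc : ContinuousOn φ (Ici D)) (hφpos : ∀ r ∈ Ici D, 0 < φ r) {w : ℝ}
    (hw : D < w) : HasDerivAt (Hfun D φ) (1 / φ w) w :=
  hasDerivAt_integral_of_continuousOn_Ici (q := fun r => 1 / φ r)
    (continuousOn_const.div hφc fun r hr => (hφpos r hr).ne') hw

end Inverses

theorem stmt_5_general (D : ℝ) (φ φ' ψ : ℝ → ℝ)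
    (hφc : ContinuousOn φ (Set.Ici D)) (hφpos : ∀ r ∈ Set.Ici D, 0 < φ r)
    (hφd : ∀ r ∈ Set.Ici D, HasDerivWithinAt φ (φ' r) (Set.Ici D) r)
    (hψc : ContinuousOn ψ (Set.Ici D)) (hψnn : ∀ r ∈ Set.Ici D, 0 ≤ ψ r)
    (x c η : ℝ) (hx : 0 < x) (hc : 0 ≤ c) (hη : 0 ≤ η)
    (hlt : η < Hfun D φ (Finv D ψ x c)) :
    HasDerivAt (fun u => Gfun D φ ψ u c η)
      (φ (Gfun D φ ψ x c η) * Real.exp (-(c * ∫ r in D..(Finv D ψ x c), ψ r)) /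
        φ (Finv D ψ x c)) x ∧
    HasDerivAt
      (fun u => φ (Gfun D φ ψ u c η) * Real.exp (-(c * ∫ r in D..(Finv D ψ u c), ψ r)) /
        φ (Finv D ψ u c))
      ((φ (Gfun D φ ψ x c η) * Real.exp (-(c * ∫ r in D..(Finv D ψ x c), ψ r)) /
          φ (Finv D ψ x c)) ^ 2 / φ (Gfun D φ ψ x c η) *
        (φ' (Gfun D φ ψ x c η) - φ' (Finv D ψ x c) -
          c * φ (Finv D ψ x c) * ψ (Finv D ψ x c))) x := by
  obtain ⟨hwD, hFinv⟩ := hasDerivAt_Finv hψc hψnn hx hc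
  obtain ⟨hgD, hHinv⟩ : D < Gfun D φ ψ x c η ∧
      HasDerivAt (Hinv D φ) (φ (Gfun D φ ψ x c η)) (Hfun D φ (Finv D ψ x c) - η) :=
    hasDerivAt_Hinv hφc hφpos (sub_pos.2 hlt) hwD.le (sub_le_self _ hη)
  have hφ_deriv : ∀ r, D < r → HasDerivAt φ (φ' r) r := fun r hr =>
    (hφd r hr.le).hasDerivAt (Ici_mem_nhds hr)
  have hφw : φ (Finv D ψ x c) ≠ 0 := (hφpos _ hwD.le).ne'
  have hG : HasDerivAt (fun u => Gfun D φ ψ u c η)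
      (φ (Gfun D φ ψ x c η) * Real.exp (-(c * ∫ r in D..(Finv D ψ x c), ψ r)) /
        φ (Finv D ψ x c)) x :=
    (hHinv.comp x (((hasDerivAt_Hfun hφc hφpos hwD).comp x hFinv).sub_const η)).congr_deriv
      (by ring)
  refine ⟨hG, ?_⟩
  have hΨ : HasDerivAt (fun u => ∫ r in D..Finv D ψ u c, ψ r)
      (ψ (Finv D ψ x c) * Real.exp (-(c * ∫ r in D..(Finv D ψ x c), ψ r))) x :=
    (hasDerivAt_integral_of_continuousOn_Ici hψc hwD).comp x hFinv
  have hφFinv : HasDerivAt (fun u => φ (Finv D ψ u c))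
      (φ' (Finv D ψ x c) * Real.exp (-(c * ∫ r in D..(Finv D ψ x c), ψ r))) x :=
    (hφ_deriv _ hwD).comp x hFinv
  refine ((((hφ_deriv _ hgD).comp x hG).mul (hΨ.const_mul c).neg.exp).div hφFinv hφw
    ).congr_deriv ?_
  simp only [Function.comp_apply, Pi.mul_apply, Pi.neg_apply]
  field_simp
  ring

/-- Assume moreover that `φ` is of class `C¹` on `[D, ∞)`, with derivative `φ'`.
If `x > 0`, `c ≥ 0`, `η ≥ 0` and `η < H(F⁻¹(x, c))`, then the first partial derivative of `G`
with respect to its first argument at `(x,c,η)` is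
`∂G/∂x (x,c,η) = φ(G(x,c,η)) · exp(−c ∫_D^{F⁻¹(x,c)} ψ(r) dr) / φ(F⁻¹(x,c))`, and the second
partial derivative of `G` with respect to its first argument exists at `(x,c,η)` and equals
`(∂G/∂x (x,c,η))² / φ(G(x,c,η)) · (φ'(G(x,c,η)) − φ'(F⁻¹(x,c)) − c·φ(F⁻¹(x,c))·ψ(F⁻¹(x,c)))`. -/
theorem stmt_5 (D : ℝ) (hD : 0 ≤ D) (φ φ' ψ : ℝ → ℝ)
    (hφc : ContinuousOn φ (Set.Ici D)) (hφpos : ∀ r ∈ Set.Ici D, 0 < φ r)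
    (hφd : ∀ r ∈ Set.Ici D, HasDerivWithinAt φ (φ' r) (Set.Ici D) r)
    (hφ'c : ContinuousOn φ' (Set.Ici D))
    (hψc : ContinuousOn ψ (Set.Ici D)) (hψnn : ∀ r ∈ Set.Ici D, 0 ≤ ψ r)
    (x c η : ℝ) (hx : 0 < x) (hc : 0 ≤ c) (hη : 0 ≤ η)
    (hlt : η < Hfun D φ (Finv D ψ x c)) :
    HasDerivAt (fun u => Gfun D φ ψ u c η)
      (φ (Gfun D φ ψ x c η) * Real.exp (-(c * ∫ r in D..(Finv D ψ x c), ψ r)) /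
        φ (Finv D ψ x c)) x ∧
    HasDerivAt
      (fun u => φ (Gfun D φ ψ u c η) * Real.exp (-(c * ∫ r in D..(Finv D ψ u c), ψ r)) /
        φ (Finv D ψ u c))
      ((φ (Gfun D φ ψ x c η) * Real.exp (-(c * ∫ r in D..(Finv D ψ x c), ψ r)) /
          φ (Finv D ψ x c)) ^ 2 / φ (Gfun D φ ψ x c η) *
        (φ' (Gfun D φ ψ x c η) - φ' (Finv D ψ x c) -
          c * φ (Finv D ψ x c) * ψ (Finv D ψ x c))) x :=
  stmt_5_general D φ φ' ψ hφc hφpos hφd hψc hψnn x c η hx hc hη hlt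
end

section
/- Fix D > 1 and a ≥ 0. Fix T > 0 and let η : [0, T] → ℝ be continuous and nondecreasing with η(0) = 0 and η(T) ≤ a. Define x_t = exp( ln(D) · e^{a − η(t)} ) for t ∈ [0, T]. Then for every t ∈ [0, T], x_t = x_T + ∫_{(t, T]} x_s · ln(x_s) dη(s), where the integral is the Lebesgue–Stieltjes integral with respect to the measure induced by η on [0, T]. -/
/-!
Substituting `u = η s`: for continuous `η`, the push-forward of `η.measure` restricted to
`(t, T]` under `η` is Lebesgue measure on `(η t, η T]`, since the level sets of `η` are
`η.measure`-null and all other preimages are intervals. The integral thus becomes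
`∫_{(η t, η T]} x u · ln (x u) du` with `x u = exp (ln D · e^{a - u})`, and `x` solves
`x' = -x ln x`, so the fundamental theorem of calculus finishes.
-/

open MeasureTheory Set

namespace StieltjesFunction

variable (f : StieltjesFunction ℝ)

theorem measure_preimage_singleton_eq_zero (hf : Continuous f) (c : ℝ) :
    f.measure (f ⁻¹' {c}) = 0 := by
  have hpiece : ∀ n : ℤ, f.measure (f ⁻¹' {c} ∩ Icc (n : ℝ) (n + 1)) = 0 := by
    intro n
    set K := f ⁻¹' {c} ∩ Icc (n : ℝ) (n + 1)
    have hK : IsCompact K :=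
      isCompact_Icc.inter_left (isClosed_singleton.preimage hf)
    rcases K.eq_empty_or_nonempty with hempty | hne
    · rw [hempty, measure_empty]
    obtain ⟨p, hpK, hp⟩ := hK.exists_isLeast hne
    obtain ⟨q, hqK, hq⟩ := hK.exists_isGreatest hne
    refine measure_mono_null (show K ⊆ Icc p q from fun s hs => ⟨hp hs, hq hs⟩) ?_
    rw [measure_Icc, hf.continuousAt.continuousWithinAt.leftLim_eq, hpK.1, hqK.1, sub_self,
      ENNReal.ofReal_zero]
  rw [← inter_univ (f ⁻¹' {c}), ← iUnion_Icc_intCast, inter_iUnion]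
  exact measure_iUnion_null hpiece

theorem map_restrict_Ioc (hf : Continuous f) {a b : ℝ} (hab : a ≤ b) :
    (f.measure.restrict (Ioc a b)).map f = volume.restrict (Ioc (f a) (f b)) := by
  have hfm : Measurable f := f.mono.measurable
  have : IsFiniteMeasure (f.measure.restrict (Ioc a b)) :=
    ⟨by simp [measure_Ioc]⟩
  refine Measure.ext_of_Iic _ _ fun y => ?_
  set y' := max (f a) (min y (f b)) with hy'
  obtain ⟨σ, hσ, hfσ⟩ : ∃ σ ∈ Icc a b, f σ = y' :=
    intermediate_value_Icc hab hf.continuousOn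
      ⟨le_max_left _ _, max_le (f.mono hab) (min_le_right _ _)⟩
  -- the two sets differ only inside the null level set `f ⁻¹' {y'}`
  have hae : (f ⁻¹' Iic y ∩ Ioc a b : Set ℝ) =ᵐ[f.measure] Ioc a σ := by
    refine ae_eq_set.2 ⟨measure_mono_null ?_ (f.measure_preimage_singleton_eq_zero hf y'),
      measure_mono_null ?_ (f.measure_preimage_singleton_eq_zero hf y')⟩
    · rintro s ⟨⟨hsy, has, hsb⟩, hsσ⟩
      have hσs : σ < s := not_le.1 fun h => hsσ ⟨has, h⟩
      refine le_antisymm (le_max_of_le_right (le_min hsy (f.mono hsb))) ?_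
      exact hfσ ▸ f.mono hσs.le
    · rintro s ⟨⟨has, hsσ⟩, hs⟩
      have hys : y < f s := not_le.1 fun h => hs ⟨h, has, hsσ.trans hσ.2⟩
      refine le_antisymm (hfσ ▸ f.mono hsσ) ?_
      exact max_le (f.mono has.le) ((min_le_left _ _).trans hys.le)
  rw [Measure.map_apply hfm measurableSet_Iic, Measure.restrict_apply (hfm measurableSet_Iic),
    Measure.restrict_apply measurableSet_Iic, measure_congr hae, measure_Ioc, hfσ,
    inter_comm, Ioc_inter_Iic, Real.volume_Ioc, min_comm]
  rcases le_total (f a) (min y (f b)) with h | h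
  · rw [hy', max_eq_right h]
  · rw [hy', max_eq_left h, sub_self, ENNReal.ofReal_zero, ENNReal.ofReal_of_nonpos (by linarith)]

theorem setIntegral_comp_Ioc {E : Type*} [NormedAddCommGroup E] [NormedSpace ℝ E]
    (hf : Continuous f) {a b : ℝ} (hab : a ≤ b) {g : ℝ → E}
    (hg : AEStronglyMeasurable g (volume.restrict (Ioc (f a) (f b)))) :
    ∫ s in Ioc a b, g (f s) ∂f.measure = ∫ u in Ioc (f a) (f b), g u := by
  rw [← f.map_restrict_Ioc hf hab] at hg ⊢
  exact (integral_map f.mono.measurable.aemeasurable hg).symm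

end StieltjesFunction

open Real in
theorem hasDerivAt_exp_mul_exp_sub (c a u : ℝ) :
    HasDerivAt (fun v => exp (c * exp (a - v)))
      (-(exp (c * exp (a - u)) * log (exp (c * exp (a - u))))) u := by
  rw [log_exp]
  convert (((hasDerivAt_id' u).const_sub a).exp.const_mul c).exp using 1
  ring

theorem stmt_10_general (D a T : ℝ)
    (η : StieltjesFunction ℝ) (hηc : Continuous η) :
    ∀ t ∈ Set.Icc 0 T,
      Real.exp (Real.log D * Real.exp (a - η t)) =
        Real.exp (Real.log D * Real.exp (a - η T)) +
          ∫ s in Set.Ioc t T,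
            Real.exp (Real.log D * Real.exp (a - η s)) *
              Real.log (Real.exp (Real.log D * Real.exp (a - η s))) ∂η.measure := by
  intro t ht
  set x : ℝ → ℝ := fun u => Real.exp (Real.log D * Real.exp (a - u))
  have hrate : Continuous fun u => x u * Real.log (x u) := by
    simp only [x, Real.log_exp]
    fun_prop
  have hftc : ∫ u in η t..η T, -(x u * Real.log (x u)) = x (η T) - x (η t) :=
    intervalIntegral.integral_eq_sub_of_hasDerivAt
      (fun u _ => hasDerivAt_exp_mul_exp_sub _ _ u) (hrate.neg.intervalIntegrable _ _)
  rw [intervalIntegral.integral_neg, intervalIntegral.integral_of_le (η.mono ht.2)] at hftc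
  rw [η.setIntegral_comp_Ioc hηc ht.2 hrate.aestronglyMeasurable]
  linarith

/-- Fix `D > 1`, `a ≥ 0`, `T > 0` and a continuous nondecreasing (Stieltjes)
function `η` with `η 0 = 0` and `η T ≤ a`. Setting `x_t = exp(ln D · e^{a − η t})`, for every
`t ∈ [0, T]` one has `x_t = x_T + ∫_{(t, T]} x_s · ln(x_s) dη(s)` (a Lebesgue–Stieltjes
integral with respect to the measure induced by `η`). -/
theorem stmt_10 (D a T : ℝ) (hD : 1 < D) (ha : 0 ≤ a) (hT : 0 < T)
    (η : StieltjesFunction ℝ) (hηc : Continuous η) (hη0 : η 0 = 0) (hηT : η T ≤ a) :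
    ∀ t ∈ Set.Icc 0 T,
      Real.exp (Real.log D * Real.exp (a - η t)) =
        Real.exp (Real.log D * Real.exp (a - η T)) +
          ∫ s in Set.Ioc t T,
            Real.exp (Real.log D * Real.exp (a - η s)) *
              Real.log (Real.exp (Real.log D * Real.exp (a - η s))) ∂η.measure :=
  stmt_10_general D a T η hηc
end

section
/- Fix K > 0 and T > 0, and let η : [0, T] → ℝ be continuous and nondecreasing with η(0) = 0. Define x_t = K · e^{−η(t)} for t ∈ [0, T]. Then for every t ∈ [0, T], x_t = K · e^{−η(T)} + ∫_{(t, T]} x_s dη(s), where the integral is the Lebesgue–Stieltjes integral with respect to the measure induced by η on [0, T]. -/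
/-!
The image of `dη` on `(t, T]` under the continuous nondecreasing map `η` is Lebesgue measure on
`(η t, η T]`: both give the half-line `(-∞, c]` the mass `min c (η T) - η t`, because the part of
`(t, T]` on which `η ≤ c` is an interval `(t, u]` with `η u = min c (η T)`. The change of
variables `x = η s` then turns the Stieltjes integral into `∫_{η t}^{η T} K e^{-x} dx`.
-/

open MeasureTheory Set

namespace StieltjesFunction

variable (η : StieltjesFunction ℝ) {t T : ℝ}

theorem exists_Ioc_inter_preimage_Iic_eq_Ioc (hη : Continuous η) (htT : t ≤ T) {c : ℝ}
    (hc : η t ≤ c) :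
    ∃ u ∈ Icc t T, η u = min c (η T) ∧ Ioc t T ∩ η ⁻¹' Iic c = Ioc t u := by
  set S := Icc t T ∩ η ⁻¹' Iic c
  have hSne : S.Nonempty := ⟨t, ⟨le_rfl, htT⟩, hc⟩
  have hSbdd : BddAbove S := ⟨T, fun s hs => hs.1.2⟩
  have huS : sSup S ∈ S :=
    (isClosed_Icc.inter (isClosed_Iic.preimage hη)).csSup_mem hSne hSbdd
  obtain ⟨w, hw, hηw⟩ : ∃ w ∈ Icc t T, η w = min c (η T) :=
    intermediate_value_Icc htT hη.continuousOn ⟨le_min hc (η.mono htT), min_le_right _ _⟩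
  have hwS : w ∈ S := ⟨hw, by simp [hηw]⟩
  refine ⟨sSup S, huS.1, le_antisymm (le_min huS.2 (η.mono huS.1.2)) ?_, ?_⟩
  · exact hηw ▸ η.mono (le_csSup hSbdd hwS)
  · ext s
    refine ⟨fun ⟨hs, hsc⟩ => ⟨hs.1, le_csSup hSbdd ⟨Ioc_subset_Icc_self hs, hsc⟩⟩, fun hs => ?_⟩
    exact ⟨⟨hs.1, hs.2.trans huS.1.2⟩, (η.mono hs.2).trans huS.2⟩

theorem measure_Ioc_inter_preimage_Iic (hη : Continuous η) (htT : t ≤ T) (c : ℝ) :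
    η.measure (Ioc t T ∩ η ⁻¹' Iic c) = ENNReal.ofReal (min c (η T) - η t) := by
  rcases lt_or_ge c (η t) with hc | hc
  · have hempty : Ioc t T ∩ η ⁻¹' Iic c = ∅ :=
      eq_empty_of_forall_notMem fun s ⟨hs, hsc⟩ => (hc.trans_le (η.mono hs.1.le)).not_ge hsc
    rw [hempty, measure_empty, ENNReal.ofReal_of_nonpos]
    linarith [min_le_left c (η T)]
  · obtain ⟨u, -, hηu, hset⟩ := η.exists_Ioc_inter_preimage_Iic_eq_Ioc hη htT hc
    rw [hset, measure_Ioc, hηu]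

theorem map_measure_restrict_Ioc (hη : Continuous η) (htT : t ≤ T) :
    (η.measure.restrict (Ioc t T)).map η = volume.restrict (Ioc (η t) (η T)) := by
  refine (Measure.ext_of_Iic _ _ fun c => ?_).symm
  rw [Measure.map_apply hη.measurable measurableSet_Iic,
    Measure.restrict_apply (measurableSet_Iic.preimage hη.measurable), inter_comm,
    η.measure_Ioc_inter_preimage_Iic hη htT, Measure.restrict_apply measurableSet_Iic,
    inter_comm, Ioc_inter_Iic, Real.volume_Ioc, min_comm]

theorem setIntegral_comp_Ioc_s12 {E : Type*} [NormedAddCommGroup E] [NormedSpace ℝ E] {f : ℝ → E}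
    (hη : Continuous η) (htT : t ≤ T)
    (hf : AEStronglyMeasurable f (volume.restrict (Ioc (η t) (η T)))) :
    ∫ s in Ioc t T, f (η s) ∂η.measure = ∫ x in η t..η T, f x := by
  rw [intervalIntegral.integral_of_le (η.mono htT), ← η.map_measure_restrict_Ioc hη htT,
    integral_map hη.aemeasurable]
  rwa [η.map_measure_restrict_Ioc hη htT]

end StieltjesFunction

theorem stmt_12_general (K T : ℝ)
    (η : StieltjesFunction ℝ) (hηc : Continuous η) :
    ∀ t ∈ Set.Icc 0 T,
      K * Real.exp (-η t) =
        K * Real.exp (-η T) +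
          ∫ s in Set.Ioc t T, K * Real.exp (-η s) ∂η.measure := by
  intro t ht
  have hexp : Continuous fun x => K * Real.exp (-x) := by fun_prop
  rw [η.setIntegral_comp_Ioc_s12 (f := fun x => K * Real.exp (-x)) hηc ht.2
      hexp.aestronglyMeasurable, intervalIntegral.integral_const_mul,
    intervalIntegral.integral_comp_neg Real.exp, integral_exp]
  ring

/-- Fix `K > 0`, `T > 0`, and a continuous nondecreasing (Stieltjes) function
`η` with `η 0 = 0`. Setting `x_t = K·e^{−η t}`, for every `t ∈ [0, T]` one has
`x_t = K·e^{−η T} + ∫_{(t, T]} x_s dη(s)` (a Lebesgue–Stieltjes integral with respect to the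
measure induced by `η`). -/
theorem stmt_12 (K T : ℝ) (hK : 0 < K) (hT : 0 < T)
    (η : StieltjesFunction ℝ) (hηc : Continuous η) (hη0 : η 0 = 0) :
    ∀ t ∈ Set.Icc 0 T,
      K * Real.exp (-η t) =
        K * Real.exp (-η T) +
          ∫ s in Set.Ioc t T, K * Real.exp (-η s) ∂η.measure :=
  stmt_12_general K T η hηc
end
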